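/- arXiv:2307.08040 — 2 statements merged into one kernel-verified Lean document; each statement's English description precedes it below -/
import Mathlib

section
/- Let R : [a,b] → ℝ be continuous, concave on a subinterval [u,v] ⊆ [a,b], and convex on [a,u] and on [v,b]. Let g be an affine function tangent to R at a point z* ∈ [u,v] (i.e., g(z*) = R(z*) and g(z) ≥ R(z) for z in a neighborhood within [u,v]). Define ν(z) = max{g(z), R(z)}. Then ν is convex on [a,b]. -/
/-!
On `[u,v]` the function `ν = max g R` coincides with the tangent line `g`, and `g ≤ ν` everywhere,
so `g` is a supporting line of `ν` at `u` and at `v`. A function that is convex on two adjacent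
intervals and has a supporting line at their common endpoint is convex on the union: after
subtracting the line it is nonnegative and vanishes at the junction, hence decreasing on the left
piece and increasing on the right one, and these monotonicities let one move a convex combination
straddling the junction onto a single piece. Gluing at `v` and then at `u` gives the theorem.
-/

open Set

section Gluing

variable {𝕜 : Type*} [Field 𝕜] [LinearOrder 𝕜] [IsStrictOrderedRing 𝕜] {f : 𝕜 → 𝕜} {a u b : 𝕜}

lemma convexOn_affine (s : Set 𝕜) (hs : Convex 𝕜 s) (c p d : 𝕜) :
    ConvexOn 𝕜 s fun x => c * (x - p) + d :=
  ⟨hs, fun x _ y _ α β _ _ hαβ => le_of_eq <| by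
    simp only [smul_eq_mul]; linear_combination (c * p - d) * hαβ⟩

lemma concaveOn_affine (s : Set 𝕜) (hs : Convex 𝕜 s) (c p d : 𝕜) :
    ConcaveOn 𝕜 s fun x => c * (x - p) + d :=
  ⟨hs, fun x _ y _ α β _ _ hαβ => le_of_eq <| by
    simp only [smul_eq_mul]; linear_combination (d - c * p) * hαβ⟩

lemma ConvexOn.antitoneOn_of_isMinOn_right (hf : ConvexOn 𝕜 (Icc a u) f)
    (hmin : IsMinOn f (Icc a u) u) : AntitoneOn f (Icc a u) := by
  intro x hx y hy hxy
  rcases hy.2.lt_or_eq with hyu | rfl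
  · exact hf.le_left_of_right_le'' hx (right_mem_Icc.2 (hx.1.trans hx.2)) hxy hyu (hmin hy)
  · exact hmin hx

lemma ConvexOn.monotoneOn_of_isMinOn_left (hf : ConvexOn 𝕜 (Icc u b) f)
    (hmin : IsMinOn f (Icc u b) u) : MonotoneOn f (Icc u b) := by
  intro x hx y hy hxy
  rcases hx.1.eq_or_lt with rfl | hux
  · exact hmin hy
  · exact hf.le_right_of_left_le'' (left_mem_Icc.2 (hx.1.trans hx.2)) hy hux hxy (hmin hx)

theorem convexOn_Icc_of_antitoneOn_of_monotoneOn (hf₁ : ConvexOn 𝕜 (Icc a u) f)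
    (hf₂ : ConvexOn 𝕜 (Icc u b) f) (h_anti : AntitoneOn f (Icc a u))
    (h_mono : MonotoneOn f (Icc u b)) : ConvexOn 𝕜 (Icc a b) f := by
  refine LinearOrder.convexOn_of_lt (convex_Icc a b) fun x hx z hz hxz α β hα hβ hαβ => ?_
  rcases le_or_gt z u with hzu | huz
  · exact hf₁.2 ⟨hx.1, hxz.le.trans hzu⟩ ⟨hx.1.trans hxz.le, hzu⟩ hα.le hβ.le hαβ
  rcases le_or_gt u x with hux | hxu
  · exact hf₂.2 ⟨hux, hx.2⟩ ⟨hux.trans hxz.le, hz.2⟩ hα.le hβ.le hαβ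
  have combo_mem {p q : 𝕜} (hpq : p ≤ q) : α • p + β • q ∈ Icc p q :=
    convex_Icc p q (left_mem_Icc.2 hpq) (right_mem_Icc.2 hpq) hα.le hβ.le hαβ
  have hu₁ : u ∈ Icc a u := ⟨hx.1.trans hxu.le, le_rfl⟩
  have hu₂ : u ∈ Icc u b := ⟨le_rfl, huz.le.trans hz.2⟩
  rcases le_total (α • x + β • z) u with hpu | hup
  · have hq : α • x + β • u ≤ α • x + β • z := by gcongr
    calc f (α • x + β • z)
        ≤ f (α • x + β • u) :=
          h_anti ⟨hx.1.trans (combo_mem hxu.le).1, hq.trans hpu⟩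
            ⟨hx.1.trans (combo_mem hxz.le).1, hpu⟩ hq
      _ ≤ α • f x + β • f u := hf₁.2 ⟨hx.1, hxu.le⟩ hu₁ hα.le hβ.le hαβ
      _ ≤ α • f x + β • f z := by gcongr; exact h_mono hu₂ ⟨huz.le, hz.2⟩ huz.le
  · have hq : α • x + β • z ≤ α • u + β • z := by gcongr
    calc f (α • x + β • z)
        ≤ f (α • u + β • z) :=
          h_mono ⟨hup, (combo_mem hxz.le).2.trans hz.2⟩
            ⟨hup.trans hq, (combo_mem huz.le).2.trans hz.2⟩ hq
      _ ≤ α • f u + β • f z := hf₂.2 hu₂ ⟨huz.le, hz.2⟩ hα.le hβ.le hαβ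
      _ ≤ α • f x + β • f z := by gcongr; exact h_anti ⟨hx.1, hxu.le⟩ hu₁ hxu.le

theorem convexOn_Icc_of_isMinOn (hf₁ : ConvexOn 𝕜 (Icc a u) f) (hf₂ : ConvexOn 𝕜 (Icc u b) f)
    (hu : u ∈ Icc a b) (hmin : IsMinOn f (Icc a b) u) : ConvexOn 𝕜 (Icc a b) f :=
  convexOn_Icc_of_antitoneOn_of_monotoneOn hf₁ hf₂
    (hf₁.antitoneOn_of_isMinOn_right (hmin.on_subset (Icc_subset_Icc_right hu.2)))
    (hf₂.monotoneOn_of_isMinOn_left (hmin.on_subset (Icc_subset_Icc_left hu.1)))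

theorem convexOn_Icc_of_affine_le (hf₁ : ConvexOn 𝕜 (Icc a u) f) (hf₂ : ConvexOn 𝕜 (Icc u b) f)
    (hu : u ∈ Icc a b) {c : 𝕜} (hsupp : ∀ x ∈ Icc a b, c * (x - u) + f u ≤ f x) :
    ConvexOn 𝕜 (Icc a b) f := by
  set ℓ : 𝕜 → 𝕜 := fun x => c * (x - u) + f u
  have hmin : IsMinOn (f - ℓ) (Icc a b) u := fun x hx => by
    simpa [ℓ, sub_nonneg] using hsupp x hx
  have h := convexOn_Icc_of_isMinOn (hf₁.sub (concaveOn_affine _ (convex_Icc a u) c u (f u)))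
    (hf₂.sub (concaveOn_affine _ (convex_Icc u b) c u (f u))) hu hmin
  simpa [ℓ] using h.add (convexOn_affine _ (convex_Icc a b) c u (f u))

end Gluing

theorem upper_closure_convex_general (a b u v zstar γ : ℝ)
    (hau : a ≤ u) (huv : u ≤ v) (hvb : v ≤ b)
    (R : ℝ → ℝ)
    (hconv₁ : ConvexOn ℝ (Set.Icc a u) R)
    (hconv₂ : ConvexOn ℝ (Set.Icc v b) R)
    (g : ℝ → ℝ) (hg : ∀ z, g z = γ * (z - zstar) + R zstar)
    (htang : ∀ z ∈ Set.Icc u v, R z ≤ g z) :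
    ConvexOn ℝ (Set.Icc a b) (fun z => max (g z) (R z)) := by
  set ν : ℝ → ℝ := fun z => max (g z) (R z)
  have hg_convex (s : Set ℝ) (hs : Convex ℝ s) : ConvexOn ℝ s g :=
    funext hg ▸ convexOn_affine s hs γ zstar (R zstar)
  have hν_mid : Set.EqOn g ν (Set.Icc u v) := fun z hz => (max_eq_left (htang z hz)).symm
  have hsupp (p : ℝ) (hp : p ∈ Set.Icc u v) (x : ℝ) : γ * (x - p) + ν p ≤ ν x := by
    calc γ * (x - p) + ν p = g x := by rw [← hν_mid hp, hg, hg]; ring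
      _ ≤ ν x := le_max_left _ _
  have hν_right : ConvexOn ℝ (Set.Icc u b) ν :=
    convexOn_Icc_of_affine_le ((hg_convex _ (convex_Icc u v)).congr hν_mid)
      ((hg_convex _ (convex_Icc v b)).sup hconv₂) ⟨huv, hvb⟩
      fun x _ => hsupp v ⟨huv, le_rfl⟩ x
  exact convexOn_Icc_of_affine_le ((hg_convex _ (convex_Icc a u)).sup hconv₁) hν_right
    ⟨hau, huv.trans hvb⟩ fun x _ => hsupp u ⟨le_rfl, huv⟩ x

/-- Gluing a tangent line over the concave middle piece: if `R` is continuous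
on `[a,b]`, concave on `[u,v]` and convex on `[a,u]` and `[v,b]`, and `g` is an
affine function tangent to `R` at `z* ∈ [u,v]` with `g ≥ R` on `[u,v]`, then
`ν = max (g, R)` is convex on `[a,b]`. -/
theorem upper_closure_convex (a b u v zstar γ : ℝ)
    (hau : a ≤ u) (huv : u ≤ v) (hvb : v ≤ b)
    (R : ℝ → ℝ) (hRcont : ContinuousOn R (Set.Icc a b))
    (hconc : ConcaveOn ℝ (Set.Icc u v) R)
    (hconv₁ : ConvexOn ℝ (Set.Icc a u) R)
    (hconv₂ : ConvexOn ℝ (Set.Icc v b) R)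
    (hz : zstar ∈ Set.Icc u v)
    (g : ℝ → ℝ) (hg : ∀ z, g z = γ * (z - zstar) + R zstar)
    (htang : ∀ z ∈ Set.Icc u v, R z ≤ g z) :
    ConvexOn ℝ (Set.Icc a b) (fun z => max (g z) (R z)) :=
  upper_closure_convex_general a b u v zstar γ hau huv hvb R hconv₁ hconv₂ g hg htang
end

section
/- Let F be a CDF on [a,b], and let [z̲, z̄] ⊆ [a,b] with z* = E_F[S | z̲ ≤ S ≤ z̄] (assuming F(z̄) > F(z̲)). Define G by G(s) = F(s) for s ≤ z̲, G(s) = F(z̲) for z̲ < s < z*, G(s) = F(z̄) for z* ≤ s < z̄, and G(s) = F(s) for s ≥ z̄. Then G is a mean-preserving contraction of F (G ⪯ F). -/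
/-!
The pooled CDF `G` lies below `F` to the left of `z*` and above it to the right, so
`s ↦ ∫_a^s (F - G)` first increases and then decreases. It vanishes at `s = a`, and also at
`s = b` because pooling preserves the mean: integrating by parts against `dF` gives
`∫_{z̲}^{z̄} F = z̄ F(z̄) - z̲ F(z̲) - z* (F(z̄) - F(z̲)) = ∫_{z̲}^{z̄} G`.
-/

open MeasureTheory intervalIntegral

/-- `G ⪯ F`: mean-preserving contraction order for CDFs on `[a,b]`. -/
def MPC (a b : ℝ) (G F : ℝ → ℝ) : Prop :=
  (∀ s ∈ Set.Icc a b, ∫ z in a..s, G z ≤ ∫ z in a..s, F z) ∧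
    (∫ z in a..b, G z) = ∫ z in a..b, F z

open Set

namespace StieltjesFunction

variable (F : StieltjesFunction ℝ) {x y : ℝ}

lemma measureReal_Ioc (h : x ≤ y) : F.measure.real (Ioc x y) = F y - F x := by
  rw [measureReal_def, F.measure_Ioc, ENNReal.toReal_ofReal (sub_nonneg.2 (F.mono h))]

/-- Integration by parts against `dF`, via the layer-cake formula for `z - x`. -/
lemma setIntegral_Ioc_sub_eq_intervalIntegral (h : x ≤ y) :
    ∫ z in Ioc x y, (z - x) ∂F.measure = ∫ t in x..y, (F y - F t) := by
  have hnonneg : 0 ≤ᵐ[F.measure.restrict (Ioc x y)] fun z => z - x :=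
    ae_restrict_of_forall_mem measurableSet_Ioc fun z hz => sub_nonneg.2 hz.1.le
  have hlevel : ∀ t ∈ Ioi (0 : ℝ), (F.measure.restrict (Ioc x y)).real {z | t < z - x} =
      (Ioc 0 (y - x)).indicator (fun t => F y - F (x + t)) t := by
    intro t ht
    have hset : {z | t < z - x} ∩ Ioc x y = Ioc (x + t) y := by
      ext z; simp only [mem_inter_iff, mem_ofPred_eq, mem_Ioc]; constructor
      · rintro ⟨h1, -, h3⟩; exact ⟨by linarith, h3⟩
      · rintro ⟨h1, h2⟩; exact ⟨by linarith, by linarith [mem_Ioi.1 ht], h2⟩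
    rw [measureReal_restrict_apply (measurableSet_lt measurable_const (by fun_prop)), hset]
    by_cases hty : t ≤ y - x
    · rw [indicator_of_mem (mem_Ioc.2 ⟨ht, hty⟩), F.measureReal_Ioc (by linarith)]
    · rw [indicator_of_notMem (fun hmem => hty hmem.2), Ioc_eq_empty (by linarith),
        measureReal_empty]
  rw [(continuous_sub_right x).integrableOn_Ioc.integral_eq_integral_meas_lt hnonneg,
    setIntegral_congr_fun _root_.measurableSet_Ioi hlevel,
    MeasureTheory.integral_indicator measurableSet_Ioc,
    Measure.restrict_restrict measurableSet_Ioc, inter_eq_left.2 Ioc_subset_Ioi_self,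
    ← integral_of_le (sub_nonneg.2 h),
    intervalIntegral.integral_comp_add_left (fun t => F y - F t)]
  simp

lemma setIntegral_Ioc_id (h : x ≤ y) :
    ∫ z in Ioc x y, z ∂F.measure = y * F y - x * F x - ∫ t in x..y, F t := by
  have hsub := F.setIntegral_Ioc_sub_eq_intervalIntegral h
  rw [MeasureTheory.integral_sub (f := fun z => z) continuous_id.integrableOn_Ioc
    (integrableOn_const (C := x) measure_Ioc_lt_top.ne), setIntegral_const,
    F.measureReal_Ioc h, intervalIntegral.integral_sub intervalIntegrable_const
      F.mono.intervalIntegrable, intervalIntegral.integral_const, smul_eq_mul, smul_eq_mul] at hsub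
  linarith

lemma setAverage_Ioc_mem_Icc (h : F x < F y) : ⨍ z in Ioc x y, z ∂F.measure ∈ Icc x y := by
  refine (convex_Icc x y).set_average_mem isClosed_Icc ?_ ?_
    (ae_restrict_of_forall_mem measurableSet_Ioc fun z hz => Ioc_subset_Icc_self hz)
    continuous_id.integrableOn_Ioc
  · rw [F.measure_Ioc]; simpa using h
  · exact measure_Ioc_lt_top.ne

end StieltjesFunction

theorem mpc_of_single_crossing {a b c : ℝ} {G F : ℝ → ℝ}
    (hG : IntervalIntegrable G volume a b) (hF : IntervalIntegrable F volume a b)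
    (hbelow : ∀ x ∈ Ioo a c, G x ≤ F x) (habove : ∀ x ∈ Ioo c b, F x ≤ G x)
    (hmean : ∫ z in a..b, G z = ∫ z in a..b, F z) : MPC a b G F := by
  refine ⟨fun s ⟨has, hsb⟩ => ?_, hmean⟩
  have hsub_as : uIcc a s ⊆ uIcc a b := uIcc_subset_uIcc_left (mem_uIcc_of_le has hsb)
  have hsub_sb : uIcc s b ⊆ uIcc a b := uIcc_subset_uIcc_right (mem_uIcc_of_le has hsb)
  rcases le_total s c with hsc | hcs
  · exact integral_mono_on_of_le_Ioo has (hG.mono_set hsub_as) (hF.mono_set hsub_as)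
      fun x hx => hbelow x ⟨hx.1, hx.2.trans_le hsc⟩
  · have htail : ∫ z in s..b, F z ≤ ∫ z in s..b, G z :=
      integral_mono_on_of_le_Ioo hsb (hF.mono_set hsub_sb) (hG.mono_set hsub_sb)
        fun x hx => habove x ⟨hcs.trans_lt hx.1, hx.2⟩
    rw [← integral_add_adjacent_intervals (hG.mono_set hsub_as) (hG.mono_set hsub_sb),
      ← integral_add_adjacent_intervals (hF.mono_set hsub_as) (hF.mono_set hsub_sb)] at hmean
    linarith

noncomputable def pooledCDF (F : ℝ → ℝ) (zl zh zstar : ℝ) (s : ℝ) : ℝ :=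
  if s ≤ zl then F s
  else if s < zstar then F zl
  else if s < zh then F zh
  else F s

section pooledCDF

variable {F : ℝ → ℝ} {zl zh zstar x : ℝ}

lemma pooledCDF_monotone (hF : Monotone F) : Monotone (pooledCDF F zl zh zstar) := by
  intro x y hxy
  unfold pooledCDF
  split_ifs <;> exact hF (by linarith)

lemma intervalIntegrable_pooledCDF (hF : Monotone F) (u v : ℝ) :
    IntervalIntegrable (pooledCDF F zl zh zstar) volume u v :=
  (pooledCDF_monotone hF).intervalIntegrable

lemma pooledCDF_le (hF : Monotone F) (hx : x < zstar) : pooledCDF F zl zh zstar x ≤ F x := by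
  unfold pooledCDF
  split_ifs with hxl
  · exact le_rfl
  · exact hF (not_le.1 hxl).le

lemma le_pooledCDF (hF : Monotone F) (hx : zstar < x) : F x ≤ pooledCDF F zl zh zstar x := by
  unfold pooledCDF
  split_ifs with hxl hxs hxh
  · exact le_rfl
  · exact absurd hxs (not_lt.2 hx.le)
  · exact hF hxh.le
  · exact le_rfl

lemma pooledCDF_eq_of_le (hx : x ≤ zl) : pooledCDF F zl zh zstar x = F x := if_pos hx

lemma pooledCDF_eq_of_ge (hstar : zstar ≤ zh) (hx : zh ≤ x) :
    pooledCDF F zl zh zstar x = F x := by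
  unfold pooledCDF
  split_ifs <;> first | rfl | linarith

lemma integral_pooledCDF (hF : Monotone F) (hstar : zstar ∈ Icc zl zh) :
    ∫ z in zl..zh, pooledCDF F zl zh zstar z = (zstar - zl) * F zl + (zh - zstar) * F zh := by
  have hint := intervalIntegrable_pooledCDF (zl := zl) (zh := zh) (zstar := zstar) hF
  have hlow : ∫ z in zl..zstar, pooledCDF F zl zh zstar z = ∫ _ in zl..zstar, F zl :=
    integral_congr_Ioo_of_le hstar.1 fun z hz => by
      rw [pooledCDF, if_neg (not_le.2 hz.1), if_pos hz.2]
  have hhigh : ∫ z in zstar..zh, pooledCDF F zl zh zstar z = ∫ _ in zstar..zh, F zh :=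
    integral_congr_Ioo_of_le hstar.2 fun z hz => by
      rw [pooledCDF, if_neg (by linarith [hz.1, hstar.1]), if_neg (not_lt.2 hz.1.le),
        if_pos hz.2]
  rw [← integral_add_adjacent_intervals (hint _ _) (hint _ _), hlow, hhigh,
    intervalIntegral.integral_const, intervalIntegral.integral_const, smul_eq_mul, smul_eq_mul]

lemma integral_pooledCDF_of_subset {a b : ℝ} (hF : Monotone F) (hstar : zstar ∈ Icc zl zh)
    (ha : a ≤ zl) (hb : zh ≤ b) :
    ∫ z in a..b, pooledCDF F zl zh zstar z = (∫ z in a..zl, F z) +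
      ((zstar - zl) * F zl + (zh - zstar) * F zh) + ∫ z in zh..b, F z := by
  have hint := intervalIntegrable_pooledCDF (zl := zl) (zh := zh) (zstar := zstar) hF
  rw [← integral_add_adjacent_intervals (hint _ _) (hint _ _),
    ← integral_add_adjacent_intervals (hint _ _) (hint _ _),
    integral_pooledCDF hF hstar,
    integral_congr fun z hz => pooledCDF_eq_of_le (by rw [uIcc_of_le ha] at hz; exact hz.2),
    integral_congr fun z hz => pooledCDF_eq_of_ge hstar.2 (by rw [uIcc_of_le hb] at hz; exact hz.1)]

end pooledCDF

/-- The posterior-mean distribution of a monotone partitional mechanism that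
pools `[z̲, z̄]` into its conditional mean `z*` and reveals states outside is a
mean-preserving contraction of the prior `F`. -/
theorem pooled_cdf_mpc (a b zl zh zstar : ℝ)
    (hazl : a ≤ zl) (hzlzh : zl ≤ zh) (hzhb : zh ≤ b)
    (F : StieltjesFunction ℝ) (hF : F zl < F zh)
    (hzstar : zstar =
      (∫ z in Set.Ioc zl zh, z ∂F.measure) / (F zh - F zl))
    (G : ℝ → ℝ)
    (hG : ∀ s, G s = if s ≤ zl then F s
      else if s < zstar then F zl
      else if s < zh then F zh
      else F s) :
    MPC a b G F := by
  obtain rfl : G = pooledCDF F zl zh zstar := funext hG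
  have hstar_avg : zstar = ⨍ z in Ioc zl zh, z ∂F.measure := by
    rw [hzstar, setAverage_eq, F.measureReal_Ioc hzlzh, smul_eq_mul, div_eq_inv_mul]
  have hstar_mem : zstar ∈ Icc zl zh := hstar_avg ▸ F.setAverage_Ioc_mem_Icc hF
  have hstar_mul : zstar * (F zh - F zl) = zh * F zh - zl * F zl - ∫ z in zl..zh, F z := by
    rw [← F.setIntegral_Ioc_id hzlzh, hzstar, div_mul_cancel₀ _ (sub_ne_zero.2 hF.ne')]
  refine mpc_of_single_crossing (c := zstar) (intervalIntegrable_pooledCDF F.mono a b)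
    F.mono.intervalIntegrable (fun x hx => pooledCDF_le F.mono hx.2)
    (fun x hx => le_pooledCDF F.mono hx.1) ?_
  have hF_int (u v : ℝ) : IntervalIntegrable F volume u v := F.mono.intervalIntegrable
  rw [integral_pooledCDF_of_subset F.mono hstar_mem hazl hzhb,
    ← integral_add_adjacent_intervals (hF_int a zh) (hF_int zh b),
    ← integral_add_adjacent_intervals (hF_int a zl) (hF_int zl zh)]
  linarith
end
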